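/- Let R be a Noetherian local ring and M a finitely generated R-module with two finite free resolutions (F,ψ) and (E,φ), where (F,ψ) is minimal. Then (F,ψ) is isomorphic to a direct summand of (E,φ) as complexes: there exist morphisms of complexes i : F → E and p : E → F, both lifting the identity on M, with p ∘ i = id_F. -/

import Mathlib

/-!
By the comparison theorem there are chain maps `i : F → E` and `p : E → F` lifting `id_M`.
Then `p ∘ i - id` lifts `0`, so it is null-homotopic: `p ∘ i - id = ψ h + h ψ`. Minimality of `F`
makes the right-hand side land in `𝔪 F`, so by Nakayama each `pₖ ∘ iₖ` is surjective, hence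
bijective (a surjective endomorphism of a finite module is injective). Its inverse commutes
with `ψ`, and `(p ∘ i)⁻¹ ∘ p` is the required retraction.
-/

open LinearMap

theorem Nat.exists_seq_of_forall_exists_succ {X : ℕ → Type*} (P : ∀ k, X k → Prop)
    (Q : ∀ k, X k → X (k + 1) → Prop) (x₀ : X 0) (h₀ : P 0 x₀)
    (step : ∀ k x, P k x → ∃ y, P (k + 1) y ∧ Q k x y) :
    ∃ s : ∀ k, X k, s 0 = x₀ ∧ ∀ k, Q k (s k) (s (k + 1)) := by
  choose next hnextP hnextQ using step
  let s : ∀ k, {x : X k // P k x} :=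
    fun k => Nat.rec ⟨x₀, h₀⟩ (fun k x => ⟨next k x.1 x.2, hnextP k x.1 x.2⟩) k
  exact ⟨fun k => (s k).1, rfl, fun k => hnextQ k (s k).1 (s k).2⟩

section

variable {R : Type*} [CommRing R]

theorem LinearMap.exists_comp_eq_of_range_le {P A B : Type*}
    [AddCommGroup P] [Module R P] [Module.Projective R P]
    [AddCommGroup A] [Module R A] [AddCommGroup B] [Module R B]
    (f : A →ₗ[R] B) (g : P →ₗ[R] B) (hg : range g ≤ range f) :
    ∃ g' : P →ₗ[R] A, f ∘ₗ g' = g := by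
  obtain ⟨g', hg'⟩ := Module.projective_lifting_property f.rangeRestrict
    (g.codRestrict (range f) fun x => hg (mem_range_self g x)) f.surjective_rangeRestrict
  exact ⟨g', by ext x; simpa using congrArg Subtype.val (congr($hg' x))⟩

theorem LinearMap.bijective_of_forall_sub_mem_smul_top {M : Type*} [AddCommGroup M] [Module R M]
    [Module.Finite R M] {I : Ideal R} (hI : I ≤ Ideal.jacobson ⊥) (f : M →ₗ[R] M)
    (hf : ∀ x, f x - x ∈ I • (⊤ : Submodule R M)) : Function.Bijective f := by
  have hsurj : Function.Surjective f := by
    rw [← range_eq_top, eq_top_iff]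
    refine Submodule.le_of_le_smul_of_le_jacobson_bot Module.Finite.fg_top hI fun x _ =>
      Submodule.mem_sup.mpr ⟨f x, mem_range_self f x, x - f x, ?_, add_sub_cancel _ _⟩
    simpa using Submodule.neg_mem _ (hf x)
  exact ⟨OrzechProperty.injective_of_surjective_endomorphism f hsurj, hsurj⟩

section Resolutions

variable {M : Type*} [AddCommGroup M] [Module R M]
  {P E : ℕ → Type*} [∀ k, AddCommGroup (P k)] [∀ k, Module R (P k)]
  [∀ k, AddCommGroup (E k)] [∀ k, Module R (E k)]

theorem exists_chainMap_lift [∀ k, Module.Projective R (P k)]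
    (d : ∀ k, P (k + 1) →ₗ[R] P k) (φ : ∀ k, E (k + 1) →ₗ[R] E k)
    (hd : ∀ k, d k ∘ₗ d (k + 1) = 0)
    (πP : P 0 →ₗ[R] M) (hπP : πP ∘ₗ d 0 = 0)
    (πE : E 0 →ₗ[R] M) (hπE : Function.Surjective πE)
    (hEcoker : ker πE = range (φ 0)) (hEexact : ∀ k, ker (φ k) = range (φ (k + 1))) :
    ∃ f : ∀ k, P k →ₗ[R] E k, (∀ k, φ k ∘ₗ f (k + 1) = f k ∘ₗ d k) ∧ πE ∘ₗ f 0 = πP := by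
  obtain ⟨f₀, hf₀⟩ := Module.projective_lifting_property πE πP hπE
  have h₀ : range (f₀ ∘ₗ d 0) ≤ range (φ 0) := by
    rw [← hEcoker, range_le_ker_iff, ← comp_assoc, hf₀, hπP]
  obtain ⟨f, rfl, hf⟩ := Nat.exists_seq_of_forall_exists_succ
    (X := fun k => P k →ₗ[R] E k) (fun k f => range (f ∘ₗ d k) ≤ range (φ k))
    (fun k f f' => φ k ∘ₗ f' = f ∘ₗ d k) f₀ h₀ fun k f hf => by
      obtain ⟨f', hf'⟩ := exists_comp_eq_of_range_le (φ k) (f ∘ₗ d k) hf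
      refine ⟨f', ?_, hf'⟩
      rw [← hEexact k, range_le_ker_iff, ← comp_assoc, hf', comp_assoc, hd, comp_zero]
  exact ⟨f, hf, hf₀⟩

theorem exists_nullHomotopy [∀ k, Module.Projective R (P k)]
    (d : ∀ k, P (k + 1) →ₗ[R] P k) (φ : ∀ k, E (k + 1) →ₗ[R] E k)
    (hd : ∀ k, d k ∘ₗ d (k + 1) = 0)
    (πE : E 0 →ₗ[R] M) (hEcoker : ker πE = range (φ 0))
    (hEexact : ∀ k, ker (φ k) = range (φ (k + 1)))
    (g : ∀ k, P k →ₗ[R] E k) (hg : ∀ k, φ k ∘ₗ g (k + 1) = g k ∘ₗ d k)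
    (hg₀ : πE ∘ₗ g 0 = 0) :
    ∃ h : ∀ k, P k →ₗ[R] E (k + 1), φ 0 ∘ₗ h 0 = g 0 ∧
      ∀ k, g (k + 1) = φ (k + 1) ∘ₗ h (k + 1) + h k ∘ₗ d k := by
  obtain ⟨h₀, hh₀⟩ := exists_comp_eq_of_range_le (φ 0) (g 0) <| by
    rw [← hEcoker, range_le_ker_iff, hg₀]
  -- Carrying `g k ∘ d k = φ k ∘ h k ∘ d k` along puts `g (k + 1) - h k ∘ d k` into `ker (φ k)`.
  obtain ⟨h, rfl, hh⟩ := Nat.exists_seq_of_forall_exists_succ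
    (X := fun k => P k →ₗ[R] E (k + 1)) (fun k h => g k ∘ₗ d k = φ k ∘ₗ h ∘ₗ d k)
    (fun k h h' => φ (k + 1) ∘ₗ h' = g (k + 1) - h ∘ₗ d k) h₀
    (by rw [← comp_assoc, hh₀]) fun k h hh => by
      obtain ⟨h', hh'⟩ := exists_comp_eq_of_range_le (φ (k + 1)) (g (k + 1) - h ∘ₗ d k) <| by
        rw [← hEexact k, range_le_ker_iff, comp_sub, hg, hh, ← comp_assoc, sub_self]
      refine ⟨h', ?_, hh'⟩
      rw [← comp_assoc, hh', sub_comp, comp_assoc, hd, comp_zero, sub_zero]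
  exact ⟨h, hh₀, fun k => by rw [hh, sub_add_cancel]⟩

theorem mem_smul_top_of_nullHomotopy (I : Ideal R)
    (d : ∀ k, P (k + 1) →ₗ[R] P k) (φ : ∀ k, E (k + 1) →ₗ[R] E k)
    (hdI : ∀ k x, d k x ∈ I • (⊤ : Submodule R (P k)))
    (hφI : ∀ k x, φ k x ∈ I • (⊤ : Submodule R (E k)))
    (g : ∀ k, P k →ₗ[R] E k) (h : ∀ k, P k →ₗ[R] E (k + 1))
    (hh₀ : φ 0 ∘ₗ h 0 = g 0) (hh : ∀ k, g (k + 1) = φ (k + 1) ∘ₗ h (k + 1) + h k ∘ₗ d k) :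
    ∀ k x, g k x ∈ I • (⊤ : Submodule R (E k))
  | 0, x => hh₀ ▸ hφI 0 (h 0 x)
  | k + 1, x => by
    rw [hh k]
    exact Submodule.add_mem _ (hφI (k + 1) _)
      (Submodule.smul_top_le_comap_smul_top I (h k) (hdI k x))

theorem exists_retraction_of_bijective {F : ℕ → Type*}
    [∀ k, AddCommGroup (F k)] [∀ k, Module R (F k)]
    (ψ : ∀ k, F (k + 1) →ₗ[R] F k) (φ : ∀ k, E (k + 1) →ₗ[R] E k)
    (πF : F 0 →ₗ[R] M) (πE : E 0 →ₗ[R] M)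
    (i : ∀ k, F k →ₗ[R] E k) (p : ∀ k, E k →ₗ[R] F k)
    (hi : ∀ k, φ k ∘ₗ i (k + 1) = i k ∘ₗ ψ k) (hp : ∀ k, ψ k ∘ₗ p (k + 1) = p k ∘ₗ φ k)
    (hi₀ : πE ∘ₗ i 0 = πF) (hp₀ : πF ∘ₗ p 0 = πE)
    (hpi : ∀ k, Function.Bijective (p k ∘ₗ i k)) :
    ∃ p' : ∀ k, E k →ₗ[R] F k, (∀ k, ψ k ∘ₗ p' (k + 1) = p' k ∘ₗ φ k) ∧
      πF ∘ₗ p' 0 = πE ∧ ∀ k, p' k ∘ₗ i k = LinearMap.id := by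
  let a k : F k ≃ₗ[R] F k := .ofBijective (p k ∘ₗ i k) (hpi k)
  have ha_coe k : (a k : F k →ₗ[R] F k) = p k ∘ₗ i k := rfl
  have ha k : ψ k ∘ₗ (a (k + 1) : F (k + 1) →ₗ[R] F (k + 1)) = a k ∘ₗ ψ k := by
    rw [ha_coe, ha_coe, ← comp_assoc, hp, comp_assoc, hi, ← comp_assoc]
  have ha_symm k :
      ψ k ∘ₗ ((a (k + 1)).symm : F (k + 1) →ₗ[R] F (k + 1)) = (a k).symm ∘ₗ ψ k := by
    rw [LinearEquiv.eq_toLinearMap_symm_comp, ← comp_assoc, ← ha, comp_assoc,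
      LinearEquiv.comp_symm, comp_id]
  have hπa : πF ∘ₗ (a 0 : F 0 →ₗ[R] F 0) = πF := by
    rw [ha_coe, ← comp_assoc, hp₀, hi₀]
  refine ⟨fun k => (a k).symm ∘ₗ p k, fun k => ?_, ?_, fun k => ?_⟩
  · rw [← comp_assoc, ha_symm, comp_assoc, hp, comp_assoc]
  · change πF ∘ₗ (a 0).symm ∘ₗ p 0 = πE
    rw [← hπa, comp_assoc, ← comp_assoc (p 0), LinearEquiv.comp_symm, id_comp, hp₀]
  · rw [comp_assoc, ← ha_coe, LinearEquiv.symm_comp]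

end Resolutions

end

theorem minimal_resolution_direct_summand_general
    (R : Type*) [CommRing R] [IsLocalRing R]
    (M : Type*) [AddCommGroup M] [Module R M]
    (F E : ℕ → Type*)
    [∀ k, AddCommGroup (F k)] [∀ k, Module R (F k)]
    [∀ k, Module.Free R (F k)] [∀ k, Module.Finite R (F k)]
    [∀ k, AddCommGroup (E k)] [∀ k, Module R (E k)]
    [∀ k, Module.Free R (E k)]
    (ψ : ∀ k, F (k + 1) →ₗ[R] F k)
    (φ : ∀ k, E (k + 1) →ₗ[R] E k)
    (hψ : ∀ k, (ψ k).comp (ψ (k + 1)) = 0)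
    (hφ : ∀ k, (φ k).comp (φ (k + 1)) = 0)
    (πF : F 0 →ₗ[R] M) (hπF : Function.Surjective πF)
    (hFcoker : LinearMap.ker πF = LinearMap.range (ψ 0))
    (hFexact : ∀ k, LinearMap.ker (ψ k) = LinearMap.range (ψ (k + 1)))
    (πE : E 0 →ₗ[R] M) (hπE : Function.Surjective πE)
    (hEcoker : LinearMap.ker πE = LinearMap.range (φ 0))
    (hEexact : ∀ k, LinearMap.ker (φ k) = LinearMap.range (φ (k + 1)))
    (hFmin : ∀ k, ∀ x : F (k + 1), ψ k x ∈
      (IsLocalRing.maximalIdeal R) • (⊤ : Submodule R (F k))) :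
    ∃ (i : ∀ k, F k →ₗ[R] E k) (p : ∀ k, E k →ₗ[R] F k),
      (∀ k, (φ k).comp (i (k + 1)) = (i k).comp (ψ k)) ∧
      (∀ k, (ψ k).comp (p (k + 1)) = (p k).comp (φ k)) ∧
      πE.comp (i 0) = πF ∧ πF.comp (p 0) = πE ∧
      ∀ k, (p k).comp (i k) = LinearMap.id := by
  obtain ⟨i, hi, hi₀⟩ := exists_chainMap_lift ψ φ hψ πF (range_le_ker_iff.mp hFcoker.ge)
    πE hπE hEcoker hEexact
  obtain ⟨p, hp, hp₀⟩ := exists_chainMap_lift φ ψ hφ πE (range_le_ker_iff.mp hEcoker.ge)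
    πF hπF hFcoker hFexact
  obtain ⟨h, hh₀, hh⟩ := exists_nullHomotopy ψ ψ hψ πF hFcoker hFexact
    (fun k => p k ∘ₗ i k - LinearMap.id)
    (fun k => by
      rw [comp_sub, sub_comp, ← comp_assoc, hp, comp_assoc, hi, comp_assoc, comp_id, id_comp])
    (by rw [comp_sub, ← comp_assoc, hp₀, hi₀, comp_id, sub_self])
  have hsub := mem_smul_top_of_nullHomotopy _ ψ ψ hFmin hFmin
    (fun k => p k ∘ₗ i k - LinearMap.id) h hh₀ hh
  obtain ⟨p', hp', hp'₀, hp'i⟩ := exists_retraction_of_bijective ψ φ πF πE i p hi hp hi₀ hp₀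
    fun k => bijective_of_forall_sub_mem_smul_top (IsLocalRing.maximalIdeal_le_jacobson ⊥) _
      (hsub k)
  exact ⟨i, p', hi, hp', hi₀, hp'₀, hp'i⟩

/-- Over a Noetherian local ring `(R, m)`, a minimal free resolution `(F, ψ)`
of a finitely generated module `M` is a direct summand of any finite free
resolution `(E, φ)` of `M`: there exist morphisms of complexes `i : F → E`
and `p : E → F`, both lifting the identity on `M` (via the augmentations
`πF`, `πE`), with `p ∘ i = id_F`. -/
theorem minimal_resolution_direct_summand
    (R : Type*) [CommRing R] [IsNoetherianRing R] [IsLocalRing R]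
    (M : Type*) [AddCommGroup M] [Module R M] [Module.Finite R M]
    (F E : ℕ → Type*)
    [∀ k, AddCommGroup (F k)] [∀ k, Module R (F k)]
    [∀ k, Module.Free R (F k)] [∀ k, Module.Finite R (F k)]
    [∀ k, AddCommGroup (E k)] [∀ k, Module R (E k)]
    [∀ k, Module.Free R (E k)] [∀ k, Module.Finite R (E k)]
    (ψ : ∀ k, F (k + 1) →ₗ[R] F k)
    (φ : ∀ k, E (k + 1) →ₗ[R] E k)
    (hψ : ∀ k, (ψ k).comp (ψ (k + 1)) = 0)
    (hφ : ∀ k, (φ k).comp (φ (k + 1)) = 0)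
    (πF : F 0 →ₗ[R] M) (hπF : Function.Surjective πF)
    (hFcoker : LinearMap.ker πF = LinearMap.range (ψ 0))
    (hFexact : ∀ k, LinearMap.ker (ψ k) = LinearMap.range (ψ (k + 1)))
    (πE : E 0 →ₗ[R] M) (hπE : Function.Surjective πE)
    (hEcoker : LinearMap.ker πE = LinearMap.range (φ 0))
    (hEexact : ∀ k, LinearMap.ker (φ k) = LinearMap.range (φ (k + 1)))
    (hFmin : ∀ k, ∀ x : F (k + 1), ψ k x ∈
      (IsLocalRing.maximalIdeal R) • (⊤ : Submodule R (F k))) :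
    ∃ (i : ∀ k, F k →ₗ[R] E k) (p : ∀ k, E k →ₗ[R] F k),
      (∀ k, (φ k).comp (i (k + 1)) = (i k).comp (ψ k)) ∧
      (∀ k, (ψ k).comp (p (k + 1)) = (p k).comp (φ k)) ∧
      πE.comp (i 0) = πF ∧ πF.comp (p 0) = πE ∧
      ∀ k, (p k).comp (i k) = LinearMap.id :=
  minimal_resolution_direct_summand_general R M F E ψ φ hψ hφ πF hπF hFcoker hFexact πE hπE hEcoker
    hEexact hFmin
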